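/- arXiv:1906.01770 — 2 statements merged into one kernel-verified Lean document; each statement's English description precedes it below -/
import Mathlib

section
/- For two policies π₁, π₂ in a finite MDP with discount γ ∈ [0,1), the L1 distance between their discounted state distributions satisfies D(π₁, π₂) ≤ γ(1−γ)^{-1} ‖(P^{π₁} − P^{π₂}) d_{π₂}‖₁, where P^{π} is the state transition matrix induced by policy π. -/
open Matrix

open scoped BigOperators

/-! Writing `u = d₁ - d₂`, the defining equations `(1 - γ P_k) d_k = (1 - γ) d₀` give
`(1 - γ P₁) u = γ (P₁ - P₂) d₂`. A column-stochastic matrix does not increase the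
`ℓ¹` norm, so `‖(1 - γ P₁) u‖₁ ≥ ‖u‖₁ - γ ‖u‖₁`, which yields the bound. The same
estimate shows that `1 - γ P` is invertible, so the matrix inverses are genuine. -/

section Stochastic

variable {S : Type*} [Fintype S] {P : Matrix S S ℝ}

theorem sum_abs_mulVec_le_of_stochastic (hP : ∀ i j, 0 ≤ P i j)
    (hcol : ∀ j, ∑ i, P i j = 1) (x : S → ℝ) :
    ∑ i, |(P *ᵥ x) i| ≤ ∑ i, |x i| :=
  calc ∑ i, |(P *ᵥ x) i| ≤ ∑ i, ∑ j, P i j * |x j| := by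
        refine Finset.sum_le_sum fun i _ => (Finset.abs_sum_le_sum_abs _ _).trans_eq ?_
        simp only [abs_mul, abs_of_nonneg (hP _ _)]
    _ = ∑ i, |x i| := by
        rw [Finset.sum_comm]
        simp only [← Finset.sum_mul, hcol, one_mul]

variable [DecidableEq S]

theorem one_sub_mul_sum_abs_le_sum_abs_mulVec (hP : ∀ i j, 0 ≤ P i j)
    (hcol : ∀ j, ∑ i, P i j = 1) {γ : ℝ} (hγ : 0 ≤ γ) (x : S → ℝ) :
    (1 - γ) * ∑ i, |x i| ≤ ∑ i, |((1 - γ • P) *ᵥ x) i| := by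
  have hsplit : x = (1 - γ • P) *ᵥ x + γ • (P *ᵥ x) := by
    rw [sub_mulVec, smul_mulVec, one_mulVec]
    abel
  have htriangle : ∑ i, |x i| ≤ ∑ i, |((1 - γ • P) *ᵥ x) i| + γ * ∑ i, |(P *ᵥ x) i| := by
    conv_lhs => rw [hsplit]
    rw [Finset.mul_sum, ← Finset.sum_add_distrib]
    refine Finset.sum_le_sum fun i _ => (abs_add_le _ _).trans_eq ?_
    rw [Pi.smul_apply, smul_eq_mul, abs_mul, abs_of_nonneg hγ]
  nlinarith [sum_abs_mulVec_le_of_stochastic hP hcol x]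

theorem isUnit_one_sub_smul_of_stochastic (hP : ∀ i j, 0 ≤ P i j)
    (hcol : ∀ j, ∑ i, P i j = 1) {γ : ℝ} (hγ0 : 0 ≤ γ) (hγ1 : γ < 1) :
    IsUnit (1 - γ • P) := by
  rw [← mulVec_injective_iff_isUnit]
  refine (injective_iff_map_eq_zero (1 - γ • P).mulVecLin).mpr fun x hx => ?_
  have hbound := one_sub_mul_sum_abs_le_sum_abs_mulVec hP hcol hγ0 x
  simp only [mulVecLin_apply] at hx
  simp only [hx, Pi.zero_apply, abs_zero, Finset.sum_const_zero] at hbound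
  have hsum : ∑ i, |x i| = 0 :=
    le_antisymm (nonpos_of_mul_nonpos_right hbound (by linarith))
      (Finset.sum_nonneg fun i _ => abs_nonneg _)
  funext i
  simpa using (Finset.sum_eq_zero_iff_of_nonneg fun i _ => abs_nonneg (x i)).mp hsum i
    (Finset.mem_univ i)

end Stochastic

theorem stmt2_general {S : Type*} [Fintype S] [DecidableEq S]
    (P1 P2 : Matrix S S ℝ)
    (hP1nonneg : ∀ s' s, 0 ≤ P1 s' s) (hP2nonneg : ∀ s' s, 0 ≤ P2 s' s)
    (hP1col : ∀ s, ∑ s', P1 s' s = 1) (hP2col : ∀ s, ∑ s', P2 s' s = 1)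
    (d0 : S → ℝ)
    (γ : ℝ) (hγ0 : 0 ≤ γ) (hγ1 : γ < 1)
    (d1 d2 : S → ℝ)
    (hd1 : d1 = (1 - γ) • ((1 - γ • P1)⁻¹ *ᵥ d0))
    (hd2 : d2 = (1 - γ) • ((1 - γ • P2)⁻¹ *ᵥ d0)) :
    ∑ s, |d1 s - d2 s| ≤ γ * (1 - γ)⁻¹ * ∑ s, |((P1 - P2) *ᵥ d2) s| := by
  have hfix : ∀ {P : Matrix S S ℝ}, IsUnit (1 - γ • P) →
      (1 - γ • P) *ᵥ ((1 - γ) • ((1 - γ • P)⁻¹ *ᵥ d0)) = (1 - γ) • d0 := fun hU => by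
    rw [mulVec_smul, mulVec_mulVec, mul_nonsing_inv _ ((isUnit_iff_isUnit_det _).mp hU),
      one_mulVec]
  have hd1fix := hd1 ▸ hfix (isUnit_one_sub_smul_of_stochastic hP1nonneg hP1col hγ0 hγ1)
  have hd2fix := hd2 ▸ hfix (isUnit_one_sub_smul_of_stochastic hP2nonneg hP2col hγ0 hγ1)
  have hdiff : (1 - γ • P1) *ᵥ (d1 - d2) = γ • ((P1 - P2) *ᵥ d2) := by
    rw [mulVec_sub, hd1fix, ← hd2fix]
    simp only [sub_mulVec, smul_mulVec, one_mulVec]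
    module
  have hbound := one_sub_mul_sum_abs_le_sum_abs_mulVec hP1nonneg hP1col hγ0 (d1 - d2)
  simp only [hdiff, Pi.sub_apply, Pi.smul_apply, smul_eq_mul, abs_mul, abs_of_nonneg hγ0,
    ← Finset.mul_sum] at hbound
  rw [mul_right_comm, le_mul_inv_iff₀ (by linarith)]
  linarith

/-- for two policies with induced (column-stochastic) transition
matrices `P₁, P₂`, writing `d_π = (1-γ)(I - γ P^π)⁻¹ d₀` for the discounted
state distribution, the L1 distance between the two discounted state
distributions is bounded by `γ (1-γ)⁻¹ ‖(P^{π₁} - P^{π₂}) d_{π₂}‖₁`. -/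
theorem stmt2 {S : Type*} [Fintype S] [DecidableEq S]
    (P1 P2 : Matrix S S ℝ)
    (hP1nonneg : ∀ s' s, 0 ≤ P1 s' s) (hP2nonneg : ∀ s' s, 0 ≤ P2 s' s)
    (hP1col : ∀ s, ∑ s', P1 s' s = 1) (hP2col : ∀ s, ∑ s', P2 s' s = 1)
    (d0 : S → ℝ) (hd0nonneg : ∀ s, 0 ≤ d0 s) (hd0sum : ∑ s, d0 s = 1)
    (γ : ℝ) (hγ0 : 0 ≤ γ) (hγ1 : γ < 1)
    (d1 d2 : S → ℝ)
    (hd1 : d1 = (1 - γ) • ((1 - γ • P1)⁻¹ *ᵥ d0))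
    (hd2 : d2 = (1 - γ) • ((1 - γ • P2)⁻¹ *ᵥ d0)) :
    ∑ s, |d1 s - d2 s| ≤ γ * (1 - γ)⁻¹ * ∑ s, |((P1 - P2) *ᵥ d2) s| :=
  stmt2_general P1 P2 hP1nonneg hP2nonneg hP1col hP2col d0 γ hγ0 hγ1 d1 d2 hd1 hd2
end

section
/- Suppose the transition probabilities of an MDP are ρ-Lipschitz in an underlying action embedding: for all states s, s' and embeddings e_i, e_j, ‖P(s'|s,e_i) − P(s'|s,e_j)‖₁ ≤ ρ‖e_i − e_j‖₁. Let μ* be an optimal policy over the full embedding space E and π_k* an optimal policy over a finite available action set whose embeddings form an ε_k-cover of the embeddings used, i.e. every embedding has an available embedding within L1 distance ε_k. Then v^{μ*}(s₀) − v^{π_k*}(s₀) ≤ γρε_k R_max / (1−γ)². -/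
open scoped BigOperators

def probAt {S : Type*} [Fintype S] (P : S → S → ℝ) (d0 : S → ℝ) : ℕ → S → ℝ
  | 0 => d0
  | (t + 1) => fun s => ∑ s', probAt P d0 t s' * P s' s

noncomputable def dDisc {S : Type*} [Fintype S] (γ : ℝ) (P : S → S → ℝ)
    (d0 : S → ℝ) (s : S) : ℝ :=
  (1 - γ) * ∑' t : ℕ, γ ^ t * probAt P d0 t s

noncomputable def val {S : Type*} [Fintype S] (γ : ℝ) (P : S → S → ℝ)
    (d0 : S → ℝ) (R : S → ℝ) : ℝ :=
  (1 - γ)⁻¹ * ∑ s, dDisc γ P d0 s * R s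

def kern {S E : Type*} (Pt : S → E → S → ℝ) (π : S → E) : S → S → ℝ :=
  fun s s' => Pt s (π s) s'

/-!
The optimal policy `μ` over all embeddings is compared with the policy `ν` that plays, in each
state, an available embedding within `ε` of `μ`'s. By the Lipschitz condition the transition
rows of `μ` and `ν` are within `ρε` in L1, so the state distributions at time `t` are within
`tρε`, the discounted state distributions within `γρε/(1-γ)`, and the values within
`γρεRmax/(1-γ)²`. Since `ν` only uses available embeddings, its value is at most that
of `πk`.
-/

open Matrix

lemma sum_abs_vecMul_le {m n : Type*} [Fintype m] [Fintype n] (x : m → ℝ) (M : Matrix m n ℝ) :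
    ∑ j, |(x ᵥ* M) j| ≤ ∑ i, |x i| * ∑ j, |M i j| :=
  calc ∑ j, |(x ᵥ* M) j| ≤ ∑ j, ∑ i, |x i| * |M i j| := by
        refine Finset.sum_le_sum fun j _ => ?_
        simpa only [vecMul, dotProduct, abs_mul] using
          Finset.abs_sum_le_sum_abs (fun i => x i * M i j) Finset.univ
    _ = ∑ i, |x i| * ∑ j, |M i j| := by
        rw [Finset.sum_comm]
        simp only [Finset.mul_sum]

lemma summable_pow_mul_of_abs_le_one {γ : ℝ} (hγ0 : 0 ≤ γ) (hγ1 : γ < 1) {f : ℕ → ℝ}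
    (hf : ∀ t, |f t| ≤ 1) : Summable fun t => γ ^ t * f t := by
  refine Summable.of_norm_bounded (summable_geometric_of_lt_one hγ0 hγ1) fun t => ?_
  rw [Real.norm_eq_abs, abs_mul, abs_of_nonneg (pow_nonneg hγ0 t)]
  exact mul_le_of_le_one_right (pow_nonneg hγ0 t) (hf t)

section MarkovChain

variable {S : Type*} [Fintype S]

lemma probAt_succ (P : Matrix S S ℝ) (d0 : S → ℝ) (t : ℕ) :
    probAt P d0 (t + 1) = probAt P d0 t ᵥ* P :=
  rfl

variable [DecidableEq S] {P Q : Matrix S S ℝ} {d0 : S → ℝ} {δ : ℝ}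

lemma vecMul_mem_stdSimplex {p : S → ℝ} (hp : p ∈ stdSimplex ℝ S)
    (hP : P ∈ rowStochastic ℝ S) : p ᵥ* P ∈ stdSimplex ℝ S := by
  refine ⟨nonneg_vecMul_of_mem_rowStochastic hP hp.1, ?_⟩
  have hp1 : p ⬝ᵥ 1 = 1 := by simpa only [dotProduct, Pi.one_apply, mul_one] using hp.2
  simpa only [dotProduct, Pi.one_apply, mul_one] using
    vecMul_dotProduct_one_eq_one_rowStochastic hP hp1

lemma probAt_mem_stdSimplex (hP : P ∈ rowStochastic ℝ S) (hd0 : d0 ∈ stdSimplex ℝ S)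
    (t : ℕ) : probAt P d0 t ∈ stdSimplex ℝ S := by
  induction t with
  | zero => exact hd0
  | succ t ih => exact vecMul_mem_stdSimplex ih hP

lemma sum_abs_vecMul_sub_vecMul_le {p q : S → ℝ} (hP : P ∈ rowStochastic ℝ S)
    (hq : q ∈ stdSimplex ℝ S) (hPQ : ∀ s, ∑ s', |P s s' - Q s s'| ≤ δ) :
    ∑ s, |(p ᵥ* P) s - (q ᵥ* Q) s| ≤ ∑ s, |p s - q s| + δ := by
  have hsplit : p ᵥ* P - q ᵥ* Q = (p - q) ᵥ* P + q ᵥ* (P - Q) := by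
    rw [sub_vecMul, vecMul_sub]
    abel
  have hP1 : ∀ s, ∑ s', |P s s'| = 1 := fun s => by
    simp only [abs_of_nonneg (nonneg_of_mem_rowStochastic hP), sum_row_of_mem_rowStochastic hP]
  calc ∑ s, |(p ᵥ* P) s - (q ᵥ* Q) s|
      ≤ ∑ s, |((p - q) ᵥ* P) s| + ∑ s, |(q ᵥ* (P - Q)) s| := by
        rw [← Finset.sum_add_distrib]
        refine Finset.sum_le_sum fun s _ => ?_
        rw [← Pi.sub_apply (p ᵥ* P), hsplit]
        exact abs_add_le _ _
    _ ≤ ∑ s, |p s - q s| * 1 + ∑ s, q s * δ := by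
        refine add_le_add ?_ ?_
        · exact (sum_abs_vecMul_le _ _).trans_eq (by simp only [hP1, Pi.sub_apply])
        · refine (sum_abs_vecMul_le _ _).trans (Finset.sum_le_sum fun s _ => ?_)
          rw [abs_of_nonneg (hq.1 s)]
          exact mul_le_mul_of_nonneg_left (hPQ s) (hq.1 s)
    _ = ∑ s, |p s - q s| + δ := by simp only [mul_one, ← Finset.sum_mul, hq.2, one_mul]

lemma sum_abs_probAt_sub_le (hP : P ∈ rowStochastic ℝ S) (hQ : Q ∈ rowStochastic ℝ S)
    (hd0 : d0 ∈ stdSimplex ℝ S) (hPQ : ∀ s, ∑ s', |P s s' - Q s s'| ≤ δ) (t : ℕ) :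
    ∑ s, |probAt P d0 t s - probAt Q d0 t s| ≤ t * δ := by
  induction t with
  | zero => simp [probAt]
  | succ t ih =>
    rw [probAt_succ, probAt_succ]
    refine (sum_abs_vecMul_sub_vecMul_le hP (probAt_mem_stdSimplex hQ hd0 t) hPQ).trans ?_
    push_cast
    linarith

lemma abs_probAt_sub_probAt_le_one (hP : P ∈ rowStochastic ℝ S) (hQ : Q ∈ rowStochastic ℝ S)
    (hd0 : d0 ∈ stdSimplex ℝ S) (t : ℕ) (s : S) :
    |probAt P d0 t s - probAt Q d0 t s| ≤ 1 := by
  obtain ⟨hp0, hp1⟩ := mem_Icc_of_mem_stdSimplex (probAt_mem_stdSimplex hP hd0 t) s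
  obtain ⟨hq0, hq1⟩ := mem_Icc_of_mem_stdSimplex (probAt_mem_stdSimplex hQ hd0 t) s
  exact abs_sub_le_of_nonneg_of_le hp0 hp1 hq0 hq1

variable {γ : ℝ}

lemma summable_pow_mul_probAt (hγ0 : 0 ≤ γ) (hγ1 : γ < 1) (hP : P ∈ rowStochastic ℝ S)
    (hd0 : d0 ∈ stdSimplex ℝ S) (s : S) : Summable fun t => γ ^ t * probAt P d0 t s :=
  summable_pow_mul_of_abs_le_one hγ0 hγ1 fun t => by
    obtain ⟨h0, h1⟩ := mem_Icc_of_mem_stdSimplex (probAt_mem_stdSimplex hP hd0 t) s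
    rwa [abs_of_nonneg h0]

lemma abs_dDisc_sub_dDisc_le (hγ0 : 0 ≤ γ) (hγ1 : γ < 1) (hP : P ∈ rowStochastic ℝ S)
    (hQ : Q ∈ rowStochastic ℝ S) (hd0 : d0 ∈ stdSimplex ℝ S) (s : S) :
    |dDisc γ P d0 s - dDisc γ Q d0 s|
      ≤ (1 - γ) * ∑' t, γ ^ t * |probAt P d0 t s - probAt Q d0 t s| := by
  have hdiff : dDisc γ P d0 s - dDisc γ Q d0 s
      = (1 - γ) * ∑' t, γ ^ t * (probAt P d0 t s - probAt Q d0 t s) := by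
    simp only [dDisc, mul_sub]
    rw [← mul_sub, ← Summable.tsum_sub (summable_pow_mul_probAt hγ0 hγ1 hP hd0 s)
      (summable_pow_mul_probAt hγ0 hγ1 hQ hd0 s)]
  have hsummable : Summable fun t => ‖γ ^ t * (probAt P d0 t s - probAt Q d0 t s)‖ := by
    simpa only [Real.norm_eq_abs, abs_mul, abs_pow, abs_of_nonneg hγ0] using
      summable_pow_mul_of_abs_le_one hγ0 hγ1 fun t => by
        rw [abs_abs]; exact abs_probAt_sub_probAt_le_one hP hQ hd0 t s
  rw [hdiff, abs_mul, abs_of_pos (sub_pos.2 hγ1)]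
  gcongr
  simpa only [Real.norm_eq_abs, abs_mul, abs_pow, abs_of_nonneg hγ0] using
    norm_tsum_le_tsum_norm hsummable

lemma sum_abs_dDisc_sub_le (hγ0 : 0 ≤ γ) (hγ1 : γ < 1) (hP : P ∈ rowStochastic ℝ S)
    (hQ : Q ∈ rowStochastic ℝ S) (hd0 : d0 ∈ stdSimplex ℝ S)
    (hPQ : ∀ s, ∑ s', |P s s' - Q s s'| ≤ δ) :
    ∑ s, |dDisc γ P d0 s - dDisc γ Q d0 s| ≤ γ / (1 - γ) * δ := by
  set e : S → ℕ → ℝ := fun s t => |probAt P d0 t s - probAt Q d0 t s|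
  have he : ∀ s, Summable fun t => γ ^ t * e s t := fun s =>
    summable_pow_mul_of_abs_le_one hγ0 hγ1 fun t => by
      rw [abs_abs]; exact abs_probAt_sub_probAt_le_one hP hQ hd0 t s
  have hγn : ‖γ‖ < 1 := by rwa [Real.norm_of_nonneg hγ0]
  have hterm : ∀ t : ℕ, γ ^ t * ∑ s, e s t ≤ δ * (t * γ ^ t) := fun t =>
    calc γ ^ t * ∑ s, e s t ≤ γ ^ t * (t * δ) :=
          mul_le_mul_of_nonneg_left (sum_abs_probAt_sub_le hP hQ hd0 hPQ t) (pow_nonneg hγ0 t)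
      _ = δ * (t * γ ^ t) := by ring
  calc ∑ s, |dDisc γ P d0 s - dDisc γ Q d0 s|
      ≤ ∑ s, (1 - γ) * ∑' t, γ ^ t * e s t :=
        Finset.sum_le_sum fun s _ => abs_dDisc_sub_dDisc_le hγ0 hγ1 hP hQ hd0 s
    _ = (1 - γ) * ∑' t, γ ^ t * ∑ s, e s t := by
        rw [← Finset.mul_sum, ← Summable.tsum_finsetSum fun s _ => he s]
        simp only [Finset.mul_sum]
    _ ≤ (1 - γ) * ∑' t : ℕ, δ * (t * γ ^ t) := by
        refine mul_le_mul_of_nonneg_left (Summable.tsum_le_tsum hterm ?_ ?_) (sub_pos.2 hγ1).le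
        · simpa only [Finset.mul_sum] using summable_sum (s := Finset.univ) fun s _ => he s
        · simpa only [pow_one] using (summable_pow_mul_geometric_of_norm_lt_one 1 hγn).mul_left δ
    _ = γ / (1 - γ) * δ := by
        rw [tsum_mul_left, tsum_coe_mul_geometric_of_norm_lt_one hγn]
        field_simp [(sub_pos.2 hγ1).ne']

lemma val_sub_le (hγ0 : 0 ≤ γ) (hγ1 : γ < 1) (hP : P ∈ rowStochastic ℝ S)
    (hQ : Q ∈ rowStochastic ℝ S) (hd0 : d0 ∈ stdSimplex ℝ S)
    (hPQ : ∀ s, ∑ s', |P s s' - Q s s'| ≤ δ) {R : S → ℝ} {Rmax : ℝ}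
    (hR : ∀ s, |R s| ≤ Rmax) :
    val γ P d0 R - val γ Q d0 R ≤ γ * δ * Rmax / (1 - γ) ^ 2 := by
  obtain ⟨s₀, -, -⟩ := Finset.exists_ne_zero_of_sum_ne_zero (hd0.2.trans_ne one_ne_zero)
  have hRmax : 0 ≤ Rmax := (abs_nonneg _).trans (hR s₀)
  have h1γ : 0 < 1 - γ := sub_pos.2 hγ1
  calc val γ P d0 R - val γ Q d0 R
      = (1 - γ)⁻¹ * ∑ s, (dDisc γ P d0 s - dDisc γ Q d0 s) * R s := by
        simp only [val, ← mul_sub, ← Finset.sum_sub_distrib, sub_mul]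
    _ ≤ (1 - γ)⁻¹ * ∑ s, |dDisc γ P d0 s - dDisc γ Q d0 s| * Rmax := by
        refine mul_le_mul_of_nonneg_left (Finset.sum_le_sum fun s _ => ?_) (inv_pos.2 h1γ).le
        exact (le_abs_self _).trans (by rw [abs_mul]; gcongr; exact hR s)
    _ ≤ (1 - γ)⁻¹ * (γ / (1 - γ) * δ * Rmax) := by
        rw [← Finset.sum_mul]
        gcongr
        exact sum_abs_dDisc_sub_le hγ0 hγ1 hP hQ hd0 hPQ
    _ = γ * δ * Rmax / (1 - γ) ^ 2 := by field_simp

end MarkovChain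

theorem stmt4_general {S : Type*} [Fintype S] {d : ℕ}
    (γ ρ ε Rmax : ℝ) (hγ0 : 0 ≤ γ) (hγ1 : γ < 1) (hρ : 0 < ρ)
    (Pt : S → (Fin d → ℝ) → S → ℝ)
    (hPtnonneg : ∀ s e s', 0 ≤ Pt s e s')
    (hPtsum : ∀ s e, ∑ s', Pt s e s' = 1)
    (hLip : ∀ s (e₁ e₂ : Fin d → ℝ),
      ∑ s', |Pt s e₁ s' - Pt s e₂ s'| ≤ ρ * ∑ i, |e₁ i - e₂ i|)
    (R : S → ℝ) (hR : ∀ s, |R s| ≤ Rmax)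
    (d0 : S → ℝ) (hd0nonneg : ∀ s, 0 ≤ d0 s) (hd0sum : ∑ s, d0 s = 1)
    (A : Set (Fin d → ℝ))
    (μ πk : S → (Fin d → ℝ))
    (hπkopt : ∀ π : S → (Fin d → ℝ), (∀ s, π s ∈ A) →
      val γ (kern Pt π) d0 R ≤ val γ (kern Pt πk) d0 R)
    (hcover : ∀ s, ∃ e' ∈ A, ∑ i, |μ s i - e' i| ≤ ε) :
    val γ (kern Pt μ) d0 R - val γ (kern Pt πk) d0 R
      ≤ γ * ρ * ε * Rmax / (1 - γ) ^ 2 := by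
  classical
  choose ν hνA hνμ using hcover
  have hkern : ∀ π : S → (Fin d → ℝ), kern Pt π ∈ rowStochastic ℝ S := fun π =>
    mem_rowStochastic_iff_sum.2 ⟨fun s => hPtnonneg s (π s), fun s => hPtsum s (π s)⟩
  have hrows : ∀ s, ∑ s', |kern Pt μ s s' - kern Pt ν s s'| ≤ ρ * ε := fun s =>
    (hLip s (μ s) (ν s)).trans (mul_le_mul_of_nonneg_left (hνμ s) hρ.le)
  calc val γ (kern Pt μ) d0 R - val γ (kern Pt πk) d0 R
      ≤ val γ (kern Pt μ) d0 R - val γ (kern Pt ν) d0 R := by linarith [hπkopt ν hνA]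
    _ ≤ γ * (ρ * ε) * Rmax / (1 - γ) ^ 2 :=
        val_sub_le hγ0 hγ1 (hkern μ) (hkern ν) ⟨hd0nonneg, hd0sum⟩ hrows hR
    _ = γ * ρ * ε * Rmax / (1 - γ) ^ 2 := by ring

/-- Theorem 1: under the ρ-Lipschitz condition on transitions in
the action embedding, if `μ` is optimal over all embedding policies and `πk`
is optimal among policies using only available embeddings `A`, where every
embedding used by `μ` has an available embedding within L1 distance `ε`, then
`v^{μ*}(s₀) - v^{π_k*}(s₀) ≤ γ ρ ε Rmax / (1-γ)²`. -/
theorem stmt4 {S : Type*} [Fintype S] {d : ℕ}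
    (γ ρ ε Rmax : ℝ) (hγ0 : 0 ≤ γ) (hγ1 : γ < 1) (hρ : 0 < ρ)
    (Pt : S → (Fin d → ℝ) → S → ℝ)
    (hPtnonneg : ∀ s e s', 0 ≤ Pt s e s')
    (hPtsum : ∀ s e, ∑ s', Pt s e s' = 1)
    (hLip : ∀ s (e₁ e₂ : Fin d → ℝ),
      ∑ s', |Pt s e₁ s' - Pt s e₂ s'| ≤ ρ * ∑ i, |e₁ i - e₂ i|)
    (R : S → ℝ) (hR : ∀ s, |R s| ≤ Rmax)
    (d0 : S → ℝ) (hd0nonneg : ∀ s, 0 ≤ d0 s) (hd0sum : ∑ s, d0 s = 1)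
    (A : Set (Fin d → ℝ))
    (μ πk : S → (Fin d → ℝ))
    (hμopt : ∀ π : S → (Fin d → ℝ),
      val γ (kern Pt π) d0 R ≤ val γ (kern Pt μ) d0 R)
    (hπkA : ∀ s, πk s ∈ A)
    (hπkopt : ∀ π : S → (Fin d → ℝ), (∀ s, π s ∈ A) →
      val γ (kern Pt π) d0 R ≤ val γ (kern Pt πk) d0 R)
    (hcover : ∀ s, ∃ e' ∈ A, ∑ i, |μ s i - e' i| ≤ ε) :
    val γ (kern Pt μ) d0 R - val γ (kern Pt πk) d0 R
      ≤ γ * ρ * ε * Rmax / (1 - γ) ^ 2 :=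
  stmt4_general γ ρ ε Rmax hγ0 hγ1 hρ Pt hPtnonneg hPtsum hLip R hR d0 hd0nonneg hd0sum A μ πk
    hπkopt hcover
end
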